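/- For every real n > 2, there exists a number b̄ ∈ (0,1) such that h_n(b) > 0 for all b with b̄ < b < 1; that is, h_n is strictly positive in a left neighbourhood of 1. -/

import Mathlib

/-!
In the variable `t = log b`, `G(t) = h_n(eᵗ)` is an exponential polynomial in `eᵗ`,
`e^{(n-2)t}`, `e^{(n-1)t}` with coefficients affine in `t`. One computes
`G(0) = G'(0) = G''(0) = 0` and `G'''(0) = -3(n-2)² < 0`, so `G(t) ≈ -(n-2)² t³ / 2 > 0`
for small `t < 0`; rigorously, the sign of `G'''` near `0` is integrated three times.
-/

/-- `h_n(b) = n(1−b)(1−b^(n−2)) + (n−2)(1 + b^(n−2) − 2b^(n−1))·ln b`. -/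
noncomputable def pwH (n b : ℝ) : ℝ :=
  n * (1 - b) * (1 - b ^ (n - 2)) +
    (n - 2) * (1 + b ^ (n - 2) - 2 * b ^ (n - 1)) * Real.log b

open Real Filter Topology Set

section SignNearPoint

variable {f f' : ℝ → ℝ} {a : ℝ}

theorem eventually_pos_nhdsLT_of_deriv_neg (hf : ∀ x, HasDerivAt f (f' x) x) (ha : f a = 0)
    (hf' : ∀ᶠ x in 𝓝[<] a, f' x < 0) : ∀ᶠ x in 𝓝[<] a, 0 < f x := by
  obtain ⟨l, hla, hl⟩ := mem_nhdsLT_iff_exists_Ioo_subset.1 hf'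
  have hanti : StrictAntiOn f (Icc l a) :=
    strictAntiOn_of_hasDerivWithinAt_neg (convex_Icc l a)
      (fun x _ => (hf x).continuousAt.continuousWithinAt) (fun x _ => (hf x).hasDerivWithinAt)
      (by rw [interior_Icc]; exact fun x hx => hl hx)
  filter_upwards [Ioo_mem_nhdsLT hla] with x hx
  simpa only [ha] using hanti ⟨hx.1.le, hx.2.le⟩ (right_mem_Icc.2 (le_of_lt hla)) hx.2

theorem eventually_neg_nhdsLT_of_deriv_pos (hf : ∀ x, HasDerivAt f (f' x) x) (ha : f a = 0)
    (hf' : ∀ᶠ x in 𝓝[<] a, 0 < f' x) : ∀ᶠ x in 𝓝[<] a, f x < 0 := by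
  simpa using eventually_pos_nhdsLT_of_deriv_neg (f := -f) (f' := -f') (fun x => (hf x).neg)
    (by simp [ha]) (by simpa using hf')

theorem eventually_pos_nhdsLT_of_third_deriv_neg {f₁ f₂ f₃ : ℝ → ℝ}
    (hf : ∀ x, HasDerivAt f (f₁ x) x) (hf₁ : ∀ x, HasDerivAt f₁ (f₂ x) x)
    (hf₂ : ∀ x, HasDerivAt f₂ (f₃ x) x) (hf₃ : ContinuousAt f₃ a)
    (h₀ : f a = 0) (h₁ : f₁ a = 0) (h₂ : f₂ a = 0) (h₃ : f₃ a < 0) :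
    ∀ᶠ x in 𝓝[<] a, 0 < f x :=
  eventually_pos_nhdsLT_of_deriv_neg hf h₀ <| eventually_neg_nhdsLT_of_deriv_pos hf₁ h₁ <|
    eventually_pos_nhdsLT_of_deriv_neg hf₂ h₂ <|
      nhdsWithin_le_nhds (hf₃.eventually (gt_mem_nhds h₃))

end SignNearPoint

/-- Coefficients of `c₀ + c₁ eᵗ + c₂ e^{at} + c₃ e^{bt} + c₄ t + c₅ t e^{at} + c₆ t e^{bt}`,
a family of functions closed under differentiation. -/
structure ExpPoly (a b : ℝ) where
  (c₀ c₁ c₂ c₃ c₄ c₅ c₆ : ℝ)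

namespace ExpPoly

variable {a b : ℝ} (p : ExpPoly a b)

noncomputable def eval (t : ℝ) : ℝ :=
  p.c₀ + p.c₁ * exp t + p.c₂ * exp (a * t) + p.c₃ * exp (b * t) + p.c₄ * t +
    p.c₅ * (t * exp (a * t)) + p.c₆ * (t * exp (b * t))

def derivative : ExpPoly a b :=
  ⟨p.c₄, p.c₁, a * p.c₂ + p.c₅, b * p.c₃ + p.c₆, 0, a * p.c₅, b * p.c₆⟩

theorem hasDerivAt_eval (t : ℝ) : HasDerivAt p.eval (p.derivative.eval t) t := by
  have hexp (c : ℝ) : HasDerivAt (fun t => exp (c * t)) (c * exp (c * t)) t := by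
    simpa [mul_comm] using ((hasDerivAt_id t).const_mul c).exp
  have hid := hasDerivAt_id' t
  have h := ((((((hasDerivAt_const t p.c₀).add ((hasDerivAt_exp t).const_mul p.c₁)).add
    ((hexp a).const_mul p.c₂)).add ((hexp b).const_mul p.c₃)).add (hid.const_mul p.c₄)).add
    ((hid.mul (hexp a)).const_mul p.c₅)).add ((hid.mul (hexp b)).const_mul p.c₆)
  exact h.congr_deriv (by simp only [eval, derivative]; ring)

theorem continuous_eval : Continuous p.eval := by
  unfold eval; fun_prop

theorem eval_zero : p.eval 0 = p.c₀ + p.c₁ + p.c₂ + p.c₃ := by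
  simp [eval]

end ExpPoly

def pwHExp (n : ℝ) : ExpPoly (n - 2) (n - 1) :=
  ⟨n, -n, -n, n, n - 2, n - 2, -2 * (n - 2)⟩

theorem pwH_exp (n t : ℝ) : pwH n (exp t) = (pwHExp n).eval t := by
  have hsplit : exp ((n - 1) * t) = exp t * exp ((n - 2) * t) := by
    rw [← exp_add]; ring_nf
  simp only [pwH, pwHExp, ExpPoly.eval, rpow_def_of_pos (exp_pos t), log_exp,
    mul_comm t (n - 1), mul_comm t (n - 2), hsplit]
  ring

section Derivatives

variable (n : ℝ)

theorem pwHExp_eval_zero : (pwHExp n).eval 0 = 0 := by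
  simp only [ExpPoly.eval_zero, pwHExp]; ring

theorem pwHExp_derivative_eval_zero : (pwHExp n).derivative.eval 0 = 0 := by
  simp only [ExpPoly.eval_zero, ExpPoly.derivative, pwHExp]; ring

theorem pwHExp_derivative_derivative_eval_zero :
    (pwHExp n).derivative.derivative.eval 0 = 0 := by
  simp only [ExpPoly.eval_zero, ExpPoly.derivative, pwHExp]; ring

theorem pwHExp_derivative_derivative_derivative_eval_zero :
    (pwHExp n).derivative.derivative.derivative.eval 0 = -3 * (n - 2) ^ 2 := by
  simp only [ExpPoly.eval_zero, ExpPoly.derivative, pwHExp]; ring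

end Derivatives

/-- For every real `n > 2` there is `b̄ ∈ (0,1)` with `h_n(b) > 0` for all
`b̄ < b < 1`: `h_n` is strictly positive in a left neighbourhood of `1`. -/
theorem pairwise_h_pos_near_one (n : ℝ) (hn : 2 < n) :
    ∃ bbar : ℝ, 0 < bbar ∧ bbar < 1 ∧
      ∀ b : ℝ, bbar < b → b < 1 → 0 < pwH n b := by
  set p := pwHExp n
  have h₃ : p.derivative.derivative.derivative.eval 0 < 0 := by
    rw [pwHExp_derivative_derivative_derivative_eval_zero]
    nlinarith
  have hpos : ∀ᶠ t in 𝓝[<] 0, 0 < p.eval t :=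
    eventually_pos_nhdsLT_of_third_deriv_neg p.hasDerivAt_eval p.derivative.hasDerivAt_eval
      p.derivative.derivative.hasDerivAt_eval
      p.derivative.derivative.derivative.continuous_eval.continuousAt (pwHExp_eval_zero n)
      (pwHExp_derivative_eval_zero n) (pwHExp_derivative_derivative_eval_zero n) h₃
  obtain ⟨l, hl, hlpos⟩ := mem_nhdsLT_iff_exists_Ioo_subset.1 hpos
  refine ⟨exp l, exp_pos l, exp_lt_one_iff.2 hl, fun b hlb hb1 => ?_⟩
  have hb : 0 < b := (exp_pos l).trans hlb
  rw [← exp_log hb, pwH_exp]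
  exact hlpos ⟨(lt_log_iff_exp_lt hb).2 hlb, log_neg hb hb1⟩
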